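/- arXiv:2109.11396 — 12 statements merged into one kernel-verified Lean document; each statement's English description precedes it below -/
import Mathlib

section
/- For integers m, r with 0 ≤ r < m, if ∑_{i=0}^{r} C(m,i) ≤ C(m,r+1), then ∑_{i=0}^{r} C(m+1,i) < C(m+1,r+1). -/
/-!
By Pascal's rule, `∑_{i≤r} C(m+1,i) = ∑_{i≤r} C(m,i) + ∑_{i<r} C(m,i)` and
`C(m+1,r+1) = C(m,r+1) + C(m,r)`, so given the hypothesis it suffices to show
`∑_{i<r} C(m,i) < C(m,r)`. The ratio `C(m,r+1)/C(m,r) = (m-r)/(r+1)` is at least `2` exactly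
when `3r + 2 ≤ m`. If it is below `2`, the hypothesis gives
`∑_{i<r} C(m,i) + C(m,r) ≤ C(m,r+1) < 2 C(m,r)`. Otherwise all earlier ratios are at least `2`
as well, and the binomial coefficients up to `C(m,r)` grow faster than a geometric series
of ratio `2`.
-/

open Finset

namespace Nat

theorem two_mul_choose_le_choose_succ_iff {m r : ℕ} (h : r ≤ m) :
    2 * m.choose r ≤ m.choose (r + 1) ↔ 3 * r + 2 ≤ m := by
  have hpos : 0 < m.choose r := choose_pos h
  have hratio : m.choose (r + 1) * (r + 1) = m.choose r * (m - r) := choose_succ_right_eq m r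
  constructor
  · intro hle
    have : m.choose r * (2 * (r + 1)) ≤ m.choose r * (m - r) := by nlinarith
    have := Nat.le_of_mul_le_mul_left this hpos
    omega
  · intro hm
    have : 2 * (r + 1) ≤ m - r := by omega
    nlinarith

theorem sum_range_choose_lt_choose {m r : ℕ} (h : 3 * r ≤ m + 1) :
    ∑ i ∈ range r, m.choose i < m.choose r := by
  induction r with
  | zero => simp
  | succ r ih =>
    have hdouble : 2 * m.choose r ≤ m.choose (r + 1) :=
      (two_mul_choose_le_choose_succ_iff (by omega)).mpr (by omega)
    rw [sum_range_succ]
    have := ih (by omega)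
    omega

theorem sum_range_succ_choose_succ (m n : ℕ) :
    ∑ i ∈ range (n + 1), (m + 1).choose i
      = ∑ i ∈ range (n + 1), m.choose i + ∑ i ∈ range n, m.choose i := by
  induction n with
  | zero => simp
  | succ n ih =>
    rw [sum_range_succ, ih, sum_range_succ _ (n + 1), sum_range_succ _ n, choose_succ_succ']
    ring

end Nat

theorem stmt_1 (m r : ℕ) (h : r < m)
    (hle : (∑ i ∈ Finset.range (r + 1), m.choose i) ≤ m.choose (r + 1)) :
    (∑ i ∈ Finset.range (r + 1), (m + 1).choose i) < (m + 1).choose (r + 1) := by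
  have hhead : ∑ i ∈ range r, m.choose i < m.choose r := by
    by_cases hm : 3 * r ≤ m + 1
    · exact Nat.sum_range_choose_lt_choose hm
    · have hslow : ¬2 * m.choose r ≤ m.choose (r + 1) :=
        (Nat.two_mul_choose_le_choose_succ_iff h.le).not.mpr (by omega)
      rw [sum_range_succ] at hle
      omega
  rw [Nat.sum_range_succ_choose_succ, Nat.choose_succ_succ']
  omega
end

section
/- For every integer m ≥ 0 and every r with 0 ≤ r ≤ m, we have C(m,r+1)/C(m,r) < s_m(r+1)/s_m(r), where s_m(r) = ∑_{i=0}^r C(m,i) and s_m(m+1) = 2^m; equivalently C(m,r+1) · s_m(r) < C(m,r) · s_m(r+1). -/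
/-!
The ratio `C(m, i + 1) / C(m, i) = (m - i) / (i + 1)` is non-increasing in `i`, so
`C(m, r + 1) · C(m, i) ≤ C(m, r) · C(m, i + 1)` for every `i ≤ r`. Summing over `i ≤ r` gives
`C(m, r + 1) · s_m(r) ≤ C(m, r) · (s_m(r + 1) - C(m, 0))`, and `C(m, r) · C(m, 0) > 0` makes the
inequality strict.
-/

namespace Nat

theorem choose_succ_mul_choose_le_choose_mul_choose_succ {m r i : ℕ} (hi : i ≤ r) :
    m.choose (r + 1) * m.choose i ≤ m.choose r * m.choose (i + 1) := by
  have hratio : (m - r) * (i + 1) ≤ (m - i) * (r + 1) :=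
    Nat.mul_le_mul (Nat.sub_le_sub_left hi m) (Nat.succ_le_succ hi)
  refine Nat.le_of_mul_le_mul_right (c := (r + 1) * (i + 1)) ?_ (by positivity)
  calc m.choose (r + 1) * m.choose i * ((r + 1) * (i + 1))
      = (m.choose (r + 1) * (r + 1)) * (m.choose i * (i + 1)) := by ring
    _ = m.choose r * m.choose i * ((m - r) * (i + 1)) := by rw [choose_succ_right_eq]; ring
    _ ≤ m.choose r * m.choose i * ((m - i) * (r + 1)) := Nat.mul_le_mul_left _ hratio
    _ = m.choose r * (m.choose i * (m - i)) * (r + 1) := by ring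
    _ = m.choose r * m.choose (i + 1) * ((r + 1) * (i + 1)) := by
        rw [← choose_succ_right_eq]; ring

theorem choose_succ_mul_sum_choose_le (m r : ℕ) :
    m.choose (r + 1) * ∑ i ∈ Finset.range (r + 1), m.choose i
      ≤ m.choose r * ∑ i ∈ Finset.range (r + 1), m.choose (i + 1) := by
  rw [Finset.mul_sum, Finset.mul_sum]
  exact Finset.sum_le_sum fun i hi =>
    choose_succ_mul_choose_le_choose_mul_choose_succ (Finset.mem_range_succ_iff.mp hi)

end Nat

theorem stmt_3 (m r : ℕ) (h : r ≤ m) :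
    m.choose (r + 1) * (∑ i ∈ Finset.range (r + 1), m.choose i)
      < m.choose r * (∑ i ∈ Finset.range (r + 2), m.choose i) := by
  have hpos : 0 < m.choose r * m.choose 0 := by simpa using Nat.choose_pos h
  calc m.choose (r + 1) * ∑ i ∈ Finset.range (r + 1), m.choose i
      ≤ m.choose r * ∑ i ∈ Finset.range (r + 1), m.choose (i + 1) :=
        Nat.choose_succ_mul_sum_choose_le m r
    _ < m.choose r * ∑ i ∈ Finset.range (r + 1), m.choose (i + 1) + m.choose r * m.choose 0 :=
        Nat.lt_add_of_pos_right hpos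
    _ = m.choose r * ∑ i ∈ Finset.range (r + 2), m.choose i := by
        rw [Finset.sum_range_succ' _ (r + 1), Nat.mul_add]
end

section
/- For every integer m ≥ 0 and every r with 0 ≤ r < m, the ratio t_m(r) = s_m(r+1)/s_m(r) is strictly decreasing in r: t_m(r+1) < t_m(r); equivalently s_m(r+2) · s_m(r) < s_m(r+1)^2. -/
/-!
Put `a = s_m(r)`, `b = C(m, r+1)`, `c = C(m, r+2)`. Expanding, the claim
`(a + b + c) a < (a + b)²` is `c a < b (a + b)`. By log-concavity of the binomial
coefficients, `C(m, r+2) C(m, i) ≤ C(m, r+1) C(m, i+1)` for `i ≤ r`; summing over `i ≤ r`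
gives `c a ≤ b (a + b - 1)`, the `-1` coming from the missing term `C(m, 0) = 1`.
-/

open Finset

namespace Nat

theorem choose_succ_mul_choose_le_choose_mul_choose_succ_s4 (m : ℕ) {j k : ℕ} (hjk : j ≤ k) :
    m.choose (k + 1) * m.choose j ≤ m.choose k * m.choose (j + 1) := by
  refine Nat.le_of_mul_le_mul_right ?_ (by positivity : 0 < (k + 1) * (j + 1))
  calc m.choose (k + 1) * m.choose j * ((k + 1) * (j + 1))
      = m.choose (k + 1) * (k + 1) * (m.choose j * (j + 1)) := by ring
    _ = m.choose k * (m - k) * (m.choose j * (j + 1)) := by rw [choose_succ_right_eq]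
    _ ≤ m.choose k * (m - j) * (m.choose j * (k + 1)) := by gcongr
    _ = m.choose k * (m.choose j * (m - j)) * (k + 1) := by ring
    _ = m.choose k * (m.choose (j + 1) * (j + 1)) * (k + 1) := by rw [choose_succ_right_eq]
    _ = m.choose k * m.choose (j + 1) * ((k + 1) * (j + 1)) := by ring

theorem choose_succ_mul_sum_range_choose_lt {m k : ℕ} (hk : k ≤ m) :
    m.choose (k + 1) * ∑ i ∈ range k, m.choose i
      < m.choose k * ∑ i ∈ range (k + 1), m.choose i := by
  have hterm : ∀ i ∈ range k, m.choose (k + 1) * m.choose i ≤ m.choose k * m.choose (i + 1) :=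
    fun i hi => choose_succ_mul_choose_le_choose_mul_choose_succ_s4 m (mem_range.mp hi).le
  calc m.choose (k + 1) * ∑ i ∈ range k, m.choose i
      ≤ m.choose k * ∑ i ∈ range k, m.choose (i + 1) := by
        rw [mul_sum, mul_sum]; exact sum_le_sum hterm
    _ < m.choose k * (∑ i ∈ range k, m.choose (i + 1) + m.choose 0) := by
        have : 0 < m.choose k := choose_pos hk
        rw [choose_zero_right]; gcongr; omega
    _ = m.choose k * ∑ i ∈ range (k + 1), m.choose i := by rw [sum_range_succ']

end Nat

theorem stmt_4 (m r : ℕ) (h : r < m) :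
    (∑ i ∈ Finset.range (r + 3), m.choose i) * (∑ i ∈ Finset.range (r + 1), m.choose i)
      < (∑ i ∈ Finset.range (r + 2), m.choose i) ^ 2 := by
  have key := Nat.choose_succ_mul_sum_range_choose_lt (k := r + 1) h
  rw [sum_range_succ _ (r + 1)] at key
  rw [sum_range_succ _ (r + 2), sum_range_succ _ (r + 1)]
  nlinarith [key]
end

section
/- For every integer m ≥ 2 there exists an integer r* with 0 ≤ r* < m such that f_m(0) < f_m(1) < ⋯ < f_m(r*) and f_m(r*+1) > f_m(r*+2) > ⋯ > f_m(m), where f_m(r) = 2^{-r} ∑_{i=0}^r C(m,i). In particular the sequence f_m(r) is unimodal. -/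
/-!
Writing `S r = ∑_{i ≤ r} C(m,i)`, we have `f(r+1) - f(r) = (C(m,r+1) - S r) / 2^(r+1)`, so the
sequence rises at `r` exactly when `S r < C(m,r+1)`. While `3r + 5 ≤ m` the binomial coefficients
at least double at each step, which keeps `S r` below `C(m,r+1)`. Conversely, once
`C(m,r+1) ≤ S r` we must have `m ≤ 3r + 4`, so `C(m,r+2) < 2 C(m,r+1) ≤ S (r+1)`: from the first
index where the sequence fails to rise, it falls strictly.
-/

open Finset

namespace Nat

theorem two_mul_choose_le_choose_succ {n k : ℕ} (h : 3 * k + 2 ≤ n) :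
    2 * n.choose k ≤ n.choose (k + 1) := by
  have hrec := choose_succ_right_eq n k
  have hgap : 2 * (k + 1) ≤ n - k := by omega
  nlinarith [Nat.mul_le_mul_left (n.choose k) hgap]

theorem choose_succ_lt_two_mul_choose {n k : ℕ} (hk : k ≤ n) (h : n < 3 * k + 2) :
    n.choose (k + 1) < 2 * n.choose k := by
  have hrec := choose_succ_right_eq n k
  have hpos := choose_pos hk
  have hgap : n - k < 2 * (k + 1) := by omega
  nlinarith [Nat.mul_lt_mul_of_pos_left hgap hpos]

end Nat

def binomPartialSum (m r : ℕ) : ℕ := ∑ i ∈ range (r + 1), m.choose i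

namespace binomPartialSum

theorem succ (m r : ℕ) :
    binomPartialSum m (r + 1) = binomPartialSum m r + m.choose (r + 1) :=
  sum_range_succ _ _

theorem lt_choose_succ {m r : ℕ} (h : 3 * r + 5 ≤ m) :
    binomPartialSum m r < m.choose (r + 1) := by
  induction r with
  | zero =>
    simp only [binomPartialSum, zero_add, range_one, sum_singleton, Nat.choose_zero_right,
      Nat.choose_one_right]
    omega
  | succ r ih =>
    have hdouble := Nat.two_mul_choose_le_choose_succ (n := m) (k := r + 1) (by omega)
    rw [succ]
    linarith [ih (by omega)]

theorem le_three_mul_add_four {m r : ℕ} (h : m.choose (r + 1) ≤ binomPartialSum m r) :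
    m ≤ 3 * r + 4 := by
  by_contra! hm
  exact absurd h (lt_choose_succ (by omega)).not_ge

theorem choose_lt_succ {m r : ℕ} (hr : r < m) (h : m.choose (r + 1) ≤ binomPartialSum m r) :
    m.choose (r + 2) < binomPartialSum m (r + 1) := by
  have hhalf : m.choose (r + 2) < 2 * m.choose (r + 1) :=
    Nat.choose_succ_lt_two_mul_choose hr (by linarith [le_three_mul_add_four h])
  rw [succ]
  omega

theorem choose_succ_lt_of_lt {m s r : ℕ} (h : m.choose (s + 1) ≤ binomPartialSum m s)
    (hsr : s < r) (hr : r < m) : m.choose (r + 1) < binomPartialSum m r := by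
  induction r, hsr using Nat.le_induction with
  | base => exact choose_lt_succ (by omega) h
  | succ r _ ih => exact choose_lt_succ (by omega) (ih (by omega)).le

theorem one_le (m r : ℕ) : 1 ≤ binomPartialSum m r :=
  le_trans (by simp) (single_le_sum (f := m.choose) (fun _ _ => Nat.zero_le _)
    (mem_range.2 r.succ_pos))

theorem cast_eq (m r : ℕ) :
    ∑ i ∈ range (r + 1), (m.choose i : ℝ) = binomPartialSum m r := by
  simp [binomPartialSum]

theorem cast_succ_eq (m r : ℕ) :
    ∑ i ∈ range (r + 2), (m.choose i : ℝ) = binomPartialSum m r + m.choose (r + 1) := by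
  rw [sum_range_succ, cast_eq]

end binomPartialSum

theorem add_div_two_pow_succ_sub_div_two_pow (a c : ℝ) (r : ℕ) :
    (a + c) / 2 ^ (r + 1) - a / 2 ^ r = (c - a) / 2 ^ (r + 1) := by
  rw [pow_succ]
  field_simp
  ring

theorem div_two_pow_lt_add_div_two_pow_succ_iff (a c : ℝ) (r : ℕ) :
    a / 2 ^ r < (a + c) / 2 ^ (r + 1) ↔ a < c := by
  rw [← sub_pos, add_div_two_pow_succ_sub_div_two_pow, div_pos_iff_of_pos_right (by positivity),
    sub_pos]

theorem add_div_two_pow_succ_lt_div_two_pow_iff (a c : ℝ) (r : ℕ) :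
    (a + c) / 2 ^ (r + 1) < a / 2 ^ r ↔ c < a := by
  rw [← sub_neg, add_div_two_pow_succ_sub_div_two_pow, div_lt_iff₀ (by positivity), zero_mul,
    sub_neg]

theorem stmt_5 (m : ℕ) (hm : 2 ≤ m) :
    ∃ rstar : ℕ, rstar < m ∧
      (∀ r : ℕ, r < rstar →
        (∑ i ∈ Finset.range (r + 1), (m.choose i : ℝ)) / 2 ^ r
          < (∑ i ∈ Finset.range (r + 2), (m.choose i : ℝ)) / 2 ^ (r + 1)) ∧
      (∀ r : ℕ, rstar + 1 ≤ r → r < m →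
        (∑ i ∈ Finset.range (r + 2), (m.choose i : ℝ)) / 2 ^ (r + 1)
          < (∑ i ∈ Finset.range (r + 1), (m.choose i : ℝ)) / 2 ^ r) := by
  have hlast : m.choose (m - 1 + 1) ≤ binomPartialSum m (m - 1) := by
    rw [Nat.sub_add_cancel (by omega), Nat.choose_self]
    exact binomPartialSum.one_le m _
  have hexists : ∃ r, m.choose (r + 1) ≤ binomPartialSum m r := ⟨_, hlast⟩
  classical
  refine ⟨Nat.find hexists, by have := Nat.find_min' hexists hlast; omega, fun r hr => ?_, fun r hr hrm => ?_⟩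
  · rw [binomPartialSum.cast_succ_eq, binomPartialSum.cast_eq,
      div_two_pow_lt_add_div_two_pow_succ_iff]
    exact_mod_cast not_le.1 (Nat.find_min hexists hr)
  · rw [binomPartialSum.cast_succ_eq, binomPartialSum.cast_eq,
      add_div_two_pow_succ_lt_div_two_pow_iff]
    exact_mod_cast binomPartialSum.choose_succ_lt_of_lt (Nat.find_spec hexists) hr hrm
end

section
/- For every integer m ≥ 2 and every r with 0 ≤ r < ⌊m/3⌋, we have f_m(r) < f_m(r+1), i.e., f_m is strictly increasing on {0, 1, …, ⌊m/3⌋}. -/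
/-!
`2 ^ (r + 1) * (f_m(r + 1) - f_m(r)) = C(m, r + 1) - ∑_{i ≤ r} C(m, i)`. While `3k + 2 ≤ m` the ratio
`C(m, k + 1) / C(m, k) = (m - k) / (k + 1)` is at least `2`, so each binomial coefficient exceeds
the sum of all earlier ones, and the difference is positive.
-/

open Finset

lemma Nat.two_mul_choose_le_choose_succ_s6 {m k : ℕ} (h : 3 * k + 2 ≤ m) :
    2 * m.choose k ≤ m.choose (k + 1) := by
  have hratio : m.choose (k + 1) * (k + 1) = m.choose k * (m - k) := Nat.choose_succ_right_eq m k
  refine Nat.le_of_mul_le_mul_right (c := k + 1) ?_ (by omega)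
  calc 2 * m.choose k * (k + 1) = m.choose k * (2 * (k + 1)) := by ring
    _ ≤ m.choose k * (m - k) := Nat.mul_le_mul_left _ (by omega)
    _ = m.choose (k + 1) * (k + 1) := hratio.symm

lemma Nat.sum_range_choose_lt_choose_s6 {m r : ℕ} (h : 3 * r + 2 ≤ m) :
    ∑ i ∈ range (r + 1), m.choose i < m.choose (r + 1) := by
  induction r with
  | zero => simp only [zero_add, sum_range_one, Nat.choose_zero_right, Nat.choose_one_right]; omega
  | succ r ih =>
    have hdouble := Nat.two_mul_choose_le_choose_succ_s6 (m := m) (k := r + 1) h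
    rw [sum_range_succ]
    have hprev := ih (by omega)
    omega

theorem stmt_6_general (m r : ℕ) (hr : r < m / 3) :
    (∑ i ∈ Finset.range (r + 1), (m.choose i : ℝ)) / 2 ^ r
      < (∑ i ∈ Finset.range (r + 2), (m.choose i : ℝ)) / 2 ^ (r + 1) := by
  have hlt : ∑ i ∈ range (r + 1), (m.choose i : ℝ) < m.choose (r + 1) := by
    exact_mod_cast Nat.sum_range_choose_lt_choose_s6 (m := m) (r := r) (by omega)
  set S := ∑ i ∈ range (r + 1), (m.choose i : ℝ)
  calc S / 2 ^ r = (S + S) / 2 ^ (r + 1) := by rw [pow_succ]; field_simp; ring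
    _ < (S + m.choose (r + 1)) / 2 ^ (r + 1) := by gcongr
    _ = (∑ i ∈ range (r + 2), (m.choose i : ℝ)) / 2 ^ (r + 1) := by rw [sum_range_succ]

theorem stmt_6 (m r : ℕ) (hm : 2 ≤ m) (hr : r < m / 3) :
    (∑ i ∈ Finset.range (r + 1), (m.choose i : ℝ)) / 2 ^ r
      < (∑ i ∈ Finset.range (r + 2), (m.choose i : ℝ)) / 2 ^ (r + 1) :=
  stmt_6_general m r hr
end

section
/- For every integer m ≥ 15 with m ≡ 0 (mod 3), setting r_0 = m/3 + 1, we have f_m(r_0 - 1) < f_m(r_0), where f_m(r) = 2^{-r} ∑_{i=0}^r C(m,i). -/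
open Finset

/-!
With `C_i = C(m, i)`, the claim `f_m(k) < f_m(k+1)` for `m = 3k` says exactly that
`∑_{i ≤ k} C_i < C_{k+1}`. Below the middle the ratio `C_{i-1} / C_i = i / (m - i + 1)` is
increasing in `i`, so a partial sum `∑_{i ≤ j}` is dominated by a geometric series with ratio
`j / (m - j + 1)`. Stopping this bound at `j = k - 2`, where the ratio is still well below `1/2`,
and adding the last two terms `C_{k-1}, C_k` exactly leaves a margin `c · (5b³ + 61b² + 206b + 120)`
(`k = b + 5`, `c = C_{k-2}`) below `C_{k+1}`.
-/


theorem Nat.sub_two_mul_mul_sum_range_choose_le (n j : ℕ) :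
    (n + 1 - 2 * j) * ∑ i ∈ range (j + 1), n.choose i ≤ (n + 1 - j) * n.choose j := by
  obtain hj | hj := le_or_gt (2 * j) (n + 1)
  swap
  · simp [Nat.sub_eq_zero_of_le hj.le]
  suffices h : ∀ i ≤ j,
      (n + 1 - 2 * j) * ∑ l ∈ range (i + 1), n.choose l ≤ (n + 1 - j) * n.choose i from
    h j le_rfl
  intro i
  induction i with
  | zero => intro _; simp only [zero_add, sum_range_one, Nat.choose_zero_right, mul_one]; omega
  | succ i ih =>
    intro hij
    have hratio : (n + 1 - j) * n.choose i ≤ j * n.choose (i + 1) :=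
      calc (n + 1 - j) * n.choose i ≤ (n - i) * n.choose i :=
          Nat.mul_le_mul_right _ (by omega)
        _ = (i + 1) * n.choose (i + 1) := by rw [mul_comm, ← Nat.choose_succ_right_eq, mul_comm]
        _ ≤ j * n.choose (i + 1) := Nat.mul_le_mul_right _ hij
    calc (n + 1 - 2 * j) * ∑ l ∈ range (i + 1 + 1), n.choose l
        = (n + 1 - 2 * j) * ∑ l ∈ range (i + 1), n.choose l
          + (n + 1 - 2 * j) * n.choose (i + 1) := by rw [sum_range_succ, mul_add]
      _ ≤ j * n.choose (i + 1) + (n + 1 - 2 * j) * n.choose (i + 1) :=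
          Nat.add_le_add_right ((ih (by omega)).trans hratio) _
      _ = (n + 1 - j) * n.choose (i + 1) := by rw [← add_mul]; congr 1; omega

theorem Nat.sum_range_choose_lt_choose_succ (k : ℕ) (hk : 5 ≤ k) :
    ∑ i ∈ range (k + 1), (3 * k).choose i < (3 * k).choose (k + 1) := by
  obtain ⟨b, rfl⟩ : ∃ b, k = b + 5 := ⟨k - 5, by omega⟩
  have hsum := Nat.sub_two_mul_mul_sum_range_choose_le (3 * (b + 5)) (b + 3)
  have e1 := Nat.choose_succ_right_eq (3 * (b + 5)) (b + 3)
  have e2 := Nat.choose_succ_right_eq (3 * (b + 5)) (b + 4)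
  have e3 := Nat.choose_succ_right_eq (3 * (b + 5)) (b + 5)
  have hpos : 0 < (3 * (b + 5)).choose (b + 3) := Nat.choose_pos (by omega)
  rw [show 3 * (b + 5) + 1 - 2 * (b + 3) = b + 10 by omega,
    show 3 * (b + 5) + 1 - (b + 3) = 2 * b + 13 by omega] at hsum
  rw [show 3 * (b + 5) - (b + 3) = 2 * b + 12 by omega] at e1
  rw [show 3 * (b + 5) - (b + 4) = 2 * b + 11 by omega] at e2
  rw [show 3 * (b + 5) - (b + 5) = 2 * b + 10 by omega] at e3
  rw [sum_range_succ, sum_range_succ]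
  set S := ∑ i ∈ range (b + 3 + 1), (3 * (b + 5)).choose i
  set c := (3 * (b + 5)).choose (b + 3)
  set c₁ := (3 * (b + 5)).choose (b + 4)
  set c₂ := (3 * (b + 5)).choose (b + 5)
  set c₃ := (3 * (b + 5)).choose (b + 6)
  clear_value S c c₁ c₂ c₃
  have h₂ : c₂ * ((b + 4) * (b + 5)) = c * ((2 * b + 12) * (2 * b + 11)) := by
    rw [← mul_assoc, mul_right_comm, e2, mul_right_comm, e1]; ring
  have h₃ : c₃ * ((b + 4) * (b + 5) * (b + 6)) =
      c * ((2 * b + 12) * (2 * b + 11) * (2 * b + 10)) := by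
    rw [← mul_assoc, mul_right_comm, e3, mul_right_comm, h₂]; ring
  refine lt_of_mul_lt_mul_left (a := (b + 10) * ((b + 4) * (b + 5) * (b + 6))) ?_ (Nat.zero_le _)
  have hmargin : 0 < c * (5 * b ^ 3 + 61 * b ^ 2 + 206 * b + 120) := by positivity
  nlinarith [Nat.mul_le_mul_right ((b + 4) * (b + 5) * (b + 6)) hsum,
    congrArg (· * ((b + 10) * (b + 5) * (b + 6))) e1, congrArg (· * ((b + 10) * (b + 6))) h₂,
    congrArg (· * (b + 10)) h₃]

theorem stmt_8 (m : ℕ) (hm : 15 ≤ m) (h3 : m % 3 = 0) :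
    (∑ i ∈ Finset.range (m / 3 + 1), (m.choose i : ℝ)) / 2 ^ (m / 3)
      < (∑ i ∈ Finset.range (m / 3 + 2), (m.choose i : ℝ)) / 2 ^ (m / 3 + 1) := by
  obtain ⟨k, rfl⟩ : ∃ k, m = 3 * k := ⟨m / 3, by omega⟩
  have hlt : (∑ i ∈ range (k + 1), ((3 * k).choose i : ℝ)) < (3 * k).choose (k + 1) := by
    exact_mod_cast Nat.sum_range_choose_lt_choose_succ k (by omega)
  have hpow : (0 : ℝ) < 2 ^ k := by positivity
  rw [Nat.mul_div_cancel_left k three_pos, sum_range_succ _ (k + 1), pow_succ,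
    div_lt_div_iff₀ hpow (by positivity)]
  nlinarith [mul_lt_mul_of_pos_right hlt hpow]
end

section
/- The limit of (∑_{i=0}^{s} C(3s, i)) / C(3s, s) as s → ∞ equals 2. -/
/-!
Reading the sum backwards from `i = s`, the `k`-th normalized term `C(3s, s - k) / C(3s, s)` is a
product of `k` consecutive ratios `(s - j) / (2s + 1 + j)`. Each ratio is at most `1/2` and tends
to `1/2` as `s → ∞`, so the terms are dominated by `2⁻ᵏ` and tend to `2⁻ᵏ`; Tannery's theorem
(dominated convergence for series) gives the limit `∑ 2⁻ᵏ = 2`.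
-/

open Filter Finset Topology

theorem choose_sub_div_choose {n m k : ℕ} (hm : m ≤ n) (hk : k ≤ m) :
    (n.choose (m - k) : ℝ) / n.choose m = ∏ j ∈ range k, ((m : ℝ) - j) / (n - m + 1 + j) := by
  induction k with
  | zero => simp [(Nat.choose_pos hm).ne']
  | succ k ih =>
    have hstep := Nat.choose_succ_right_eq n (m - (k + 1))
    rw [show m - (k + 1) + 1 = m - k by omega] at hstep
    have hstepR :
        (n.choose (m - k) : ℝ) * (m - k) = n.choose (m - (k + 1)) * (n - m + 1 + k) := by
      have := congrArg (Nat.cast : ℕ → ℝ) hstep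
      push_cast [Nat.cast_sub (show m - (k + 1) ≤ n by omega),
        Nat.cast_sub (show k + 1 ≤ m by omega), Nat.cast_sub (show k ≤ m by omega)] at this
      linear_combination this
    have hden : (n : ℝ) - m + 1 + k ≠ 0 := by
      have : (m : ℝ) ≤ n := by exact_mod_cast hm
      positivity
    rw [prod_range_succ, ← ih (by omega), div_mul_div_comm, hstepR, mul_div_mul_right _ _ hden]

/-- Equals `C(3s, s - k) / C(3s, s)` for `k ≤ s`; for `k > s` the factor `j = s` makes it `0`. -/
noncomputable def binomRatio (s k : ℕ) : ℝ := ∏ j ∈ range k, ((s : ℝ) - j) / (2 * s + 1 + j)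

lemma choose_sub_div_choose_eq_binomRatio {s k : ℕ} (hk : k ≤ s) :
    ((3 * s).choose (s - k) : ℝ) / (3 * s).choose s = binomRatio s k := by
  rw [choose_sub_div_choose (by omega) hk, binomRatio]
  refine prod_congr rfl fun j _ => ?_
  push_cast
  ring_nf

lemma binomRatio_eq_zero {s k : ℕ} (hk : s < k) : binomRatio s k = 0 :=
  prod_eq_zero (mem_range.mpr hk) (by simp)

lemma sum_range_choose_div_choose_eq_tsum_binomRatio (s : ℕ) :
    (∑ i ∈ range (s + 1), ((3 * s).choose i : ℝ)) / (3 * s).choose s = ∑' k, binomRatio s k := by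
  rw [sum_div, ← sum_range_reflect,
    tsum_eq_sum (s := range (s + 1)) fun k hk => binomRatio_eq_zero (by simpa using hk)]
  refine sum_congr rfl fun k hk => ?_
  rw [Nat.add_sub_cancel,
    choose_sub_div_choose_eq_binomRatio (by simpa [Nat.lt_succ_iff] using hk)]

lemma abs_binomRatio_le (s k : ℕ) : |binomRatio s k| ≤ (1 / 2) ^ k := by
  rcases le_or_gt k s with hk | hk
  · rw [binomRatio, abs_prod, pow_eq_prod_const]
    refine prod_le_prod (fun _ _ => abs_nonneg _) fun j hj => ?_
    have hj : (j : ℝ) < s := by exact_mod_cast (mem_range.mp hj).trans_le hk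
    rw [abs_of_nonneg (by apply div_nonneg <;> linarith), div_le_iff₀ (by positivity)]
    linarith
  · rw [binomRatio_eq_zero hk, abs_zero]
    positivity

lemma tendsto_binomRatio (k : ℕ) : Tendsto (binomRatio · k) atTop (𝓝 ((1 / 2) ^ k)) := by
  rw [pow_eq_prod_const]
  refine tendsto_finsetProd _ fun j _ => ?_
  have hden : Tendsto (fun s : ℕ => 2 * (s : ℝ) + 1 + j) atTop atTop :=
    tendsto_atTop_add_const_right _ _ <| tendsto_atTop_add_const_right _ _ <|
      tendsto_natCast_atTop_atTop.const_mul_atTop two_pos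
  have hgap := (tendsto_const_nhds (x := (3 * (j : ℝ) + 1) / 2)).div_atTop hden
  convert (tendsto_const_nhds (x := (1 : ℝ) / 2)).sub hgap using 1
  · ext s
    field_simp
    ring
  · simp

theorem stmt_10 :
    Filter.Tendsto
      (fun s : ℕ => (∑ i ∈ Finset.range (s + 1), ((3 * s).choose i : ℝ)) / ((3 * s).choose s))
      Filter.atTop (nhds 2) := by
  rw [← tsum_geometric_two]
  refine (tendsto_tsum_of_dominated_convergence summable_geometric_two tendsto_binomRatio
    (Eventually.of_forall abs_binomRatio_le)).congr fun s => ?_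
  exact (sum_range_choose_div_choose_eq_tsum_binomRatio s).symm
end

section
/- Define polynomials A_i(r) by A_2(r) = r^2 − 15r − 10 and A_i(r) = (2r+i)·A_{i−1}(r) − B_i(r) for i ≥ 3, where B_i(r) = ∏_{ℓ=1}^i (r − ℓ). Then for every i ≥ 2, A_i is monic of degree i and its coefficient of r^{i−1} equals −C(i+4, 2). -/
/-! Induction on `i`. Multiplying a monic `A` of degree `i` by `2r + c` and subtracting the monic
`B_{i+1}` leaves a monic polynomial of degree `i + 1` (the leading coefficients give `2 - 1`), whose
coefficient of `r^i` is `2 a + c - b`, with `a` the subleading coefficient of `A` and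
`b = -C(i+2, 2)` that of `B_{i+1}` (Vieta). With `a = -C(i+4, 2)` and `c = i + 1` this is
`-C(i+5, 2)`. -/

open Polynomial Finset

section Recursion

variable {R : Type*} [CommRing R]

lemma coeff_two_X_add_C_mul_succ (c : R) (P : R[X]) (k : ℕ) :
    ((2 * X + C c) * P).coeff (k + 1) = 2 * P.coeff k + c * P.coeff (k + 1) := by
  rw [add_mul, coeff_add, mul_assoc, coeff_ofNat_mul, coeff_X_mul, coeff_C_mul]

lemma natDegree_two_X_add_C_mul_le {P : R[X]} {n : ℕ} (c : R) (hP : P.natDegree ≤ n) :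
    ((2 * X + C c) * P).natDegree ≤ n + 1 := by
  have h : (2 * X + C c).natDegree ≤ 1 := by compute_degree
  exact natDegree_mul_le.trans (by omega)

variable [Nontrivial R]

lemma monic_two_X_add_C_mul_sub {P Q : R[X]} {n : ℕ} (c : R)
    (hP : P.Monic) (hPn : P.natDegree = n + 1) (hQ : Q.Monic) (hQn : Q.natDegree = n + 2) :
    ((2 * X + C c) * P - Q).Monic ∧ ((2 * X + C c) * P - Q).natDegree = n + 2 ∧
      ((2 * X + C c) * P - Q).coeff (n + 1) = 2 * P.coeff n + c - Q.coeff (n + 1) := by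
  have hPtop : P.coeff (n + 1) = 1 := hPn ▸ hP.coeff_natDegree
  have hQtop : Q.coeff (n + 2) = 1 := hQn ▸ hQ.coeff_natDegree
  have htop : ((2 * X + C c) * P - Q).coeff (n + 2) = 1 := by
    rw [coeff_sub, coeff_two_X_add_C_mul_succ, hPtop,
      coeff_eq_zero_of_natDegree_lt (by omega : P.natDegree < n + 2), hQtop]
    ring
  have hle : ((2 * X + C c) * P - Q).natDegree ≤ n + 2 :=
    (natDegree_sub_le _ _).trans (max_le (natDegree_two_X_add_C_mul_le c hPn.le) hQn.le)
  have hdeg : ((2 * X + C c) * P - Q).natDegree = n + 2 :=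
    hle.antisymm (le_natDegree_of_ne_zero (htop ▸ one_ne_zero))
  refine ⟨by rw [Monic, leadingCoeff, hdeg, htop], hdeg, ?_⟩
  rw [coeff_sub, coeff_two_X_add_C_mul_succ, hPtop, mul_one]

end Recursion

lemma monic_prod_Icc_X_sub_C (m : ℕ) : (∏ ℓ ∈ Icc 1 m, (X - C (ℓ : ℤ))).Monic :=
  monic_prod_of_monic _ _ fun _ _ ↦ monic_X_sub_C _

lemma natDegree_prod_Icc_X_sub_C (m : ℕ) : (∏ ℓ ∈ Icc 1 m, (X - C (ℓ : ℤ))).natDegree = m := by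
  rw [natDegree_finsetProd_X_sub_C_eq_card, Nat.card_Icc, Nat.add_sub_cancel]

lemma coeff_prod_Icc_X_sub_C_self (m : ℕ) :
    (∏ ℓ ∈ Icc 1 (m + 1), (X - C (ℓ : ℤ))).coeff m = -((m + 2).choose 2 : ℤ) := by
  have h := prod_X_sub_C_coeff_card_pred (Icc 1 (m + 1)) (fun ℓ : ℕ ↦ (ℓ : ℤ)) (by simp)
  have hsum : ∑ ℓ ∈ Icc 1 (m + 1), ℓ = (m + 2).choose 2 := by
    simpa using Nat.sum_Icc_choose (m + 1) 1
  rw [Nat.card_Icc, Nat.add_sub_cancel, Nat.add_sub_cancel] at h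
  rw [h, ← hsum, Nat.cast_sum]

lemma two_mul_choose_two_add_five (n : ℕ) :
    2 * (n + 5).choose 2 = (n + 6).choose 2 + (n + 2) + (n + 3).choose 2 := by
  have pascal (k : ℕ) : (k + 1).choose 2 = k + k.choose 2 := by
    rw [Nat.choose_succ_succ', Nat.choose_one_right]
  rw [pascal (n + 5), pascal (n + 4), pascal (n + 3)]
  omega

open Polynomial in
theorem stmt_11 (A : ℕ → Polynomial ℤ)
    (hA2 : A 2 = X ^ 2 - 15 * X - 10)
    (hA : ∀ i : ℕ, 3 ≤ i →
      A i = (2 * X + C (i : ℤ)) * A (i - 1) - ∏ ℓ ∈ Finset.Icc 1 i, (X - C (ℓ : ℤ))) :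
    ∀ i : ℕ, 2 ≤ i →
      (A i).Monic ∧ (A i).natDegree = i ∧ (A i).coeff (i - 1) = -((i + 4).choose 2 : ℤ) := by
  intro i hi
  induction i, hi using Nat.le_induction with
  | base =>
    rw [hA2]
    refine ⟨by monicity!, by compute_degree!, ?_⟩
    simp [coeff_sub, coeff_X_pow, coeff_ofNat_mul]
    decide
  | succ i hi ih =>
    obtain ⟨n, rfl⟩ : ∃ n, i = n + 1 := ⟨i - 1, by omega⟩
    obtain ⟨hmon, hdeg, hcoeff⟩ := ih
    obtain ⟨hmon', hdeg', hcoeff'⟩ := monic_two_X_add_C_mul_sub _ hmon hdeg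
      (monic_prod_Icc_X_sub_C (n + 2)) (natDegree_prod_Icc_X_sub_C (n + 2))
    have hrec : A (n + 2) = (2 * X + C ((n + 2 : ℕ) : ℤ)) * A (n + 1) -
        ∏ ℓ ∈ Icc 1 (n + 2), (X - C (ℓ : ℤ)) := hA (n + 2) (by omega)
    rw [hrec]
    refine ⟨hmon', hdeg', ?_⟩
    rw [Nat.add_sub_cancel] at hcoeff
    rw [Nat.add_sub_cancel, hcoeff', hcoeff, coeff_prod_Icc_X_sub_C_self]
    have := two_mul_choose_two_add_five n
    push_cast
    ring_nf at this ⊢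
    omega
end

section
/- Define A_2(r) = r^2 − 15r − 10 and A_i(r) = (2r+i)·A_{i−1}(r) − B_i(r) for i ≥ 3, where B_i(r) = ∏_{ℓ=1}^i (r − ℓ). Then for every i ≥ 2, all non-leading coefficients of A_i are negative: writing A_i(r) = r^i + ∑_{k=0}^{i−1} a_{i,k} r^k, we have a_{i,k} < 0 for all 0 ≤ k ≤ i−1. -/
/-!
Compare integer polynomials coefficientwise, and write `Q i = ∏ (X + ℓ)` and `P i = ∏ (X - ℓ)`
(so `P i = B_i`). Since the roots `ℓ` are nonnegative, `Q i + P i - 2 X^i` has nonnegative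
coefficients, and `Q i` dominates `(X + 1)^i`, so its coefficients of degree `≤ i` are positive.
The recurrence preserves the bound `2 A_i + 3 Q_i + P_i ≤ 6 X^(i-1) (X - (i + 2))`, and below
degree `i` it yields `2 a_{i,k} ≤ -2 q_{i,k} - (q_{i,k} + p_{i,k}) ≤ -2 q_{i,k} < 0`.
-/

open Polynomial Finset

namespace Polynomial

def nonnegCoeffs (R : Type*) [Semiring R] [PartialOrder R] [IsOrderedRing R] :
    Subsemiring R[X] where
  carrier := {p | ∀ n, 0 ≤ p.coeff n}
  mul_mem' {p q} hp hq n := by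
    rw [coeff_mul]
    exact sum_nonneg fun x _ => mul_nonneg (hp x.1) (hq x.2)
  one_mem' n := by
    rw [coeff_one]
    split_ifs <;> simp
  add_mem' {p q} hp hq n := by
    rw [coeff_add]
    exact add_nonneg (hp n) (hq n)
  zero_mem' n := by simp

section Semiring

variable {R : Type*} [Semiring R] [PartialOrder R] [IsOrderedRing R]

theorem mem_nonnegCoeffs {p : R[X]} : p ∈ nonnegCoeffs R ↔ ∀ n, 0 ≤ p.coeff n := Iff.rfl

theorem X_mem_nonnegCoeffs : (X : R[X]) ∈ nonnegCoeffs R := by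
  refine mem_nonnegCoeffs.2 fun n => ?_
  rw [coeff_X]
  split_ifs <;> simp

theorem C_mem_nonnegCoeffs {a : R} (ha : 0 ≤ a) : C a ∈ nonnegCoeffs R := by
  refine mem_nonnegCoeffs.2 fun n => ?_
  rw [coeff_C]
  split_ifs <;> simp [ha]

end Semiring

section CommRing

variable {R ι : Type*} [CommRing R] [PartialOrder R] [IsOrderedRing R]
  {s : Finset ι} {a : ι → R}

theorem prod_X_add_C_add_prod_X_sub_C_sub_mem_nonnegCoeffs (ha : ∀ i ∈ s, 0 ≤ a i) :
    ∏ i ∈ s, (X + C (a i)) + ∏ i ∈ s, (X - C (a i)) - 2 * X ^ #s ∈ nonnegCoeffs R := by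
  suffices ∏ i ∈ s, (X + C (a i)) + ∏ i ∈ s, (X - C (a i)) - 2 * X ^ #s ∈ nonnegCoeffs R ∧
      ∏ i ∈ s, (X + C (a i)) - ∏ i ∈ s, (X - C (a i)) ∈ nonnegCoeffs R from this.1
  classical
  induction s using Finset.induction_on with
  | empty => norm_num [zero_mem]
  | insert j s hj ih =>
    obtain ⟨hE, hO⟩ := ih fun i hi => ha i (mem_insert_of_mem hi)
    have hC := C_mem_nonnegCoeffs (ha j (mem_insert_self j s))
    rw [prod_insert hj, prod_insert hj, card_insert_of_notMem hj]
    constructor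
    · convert add_mem (mul_mem X_mem_nonnegCoeffs hE) (mul_mem hC hO) using 1
      ring
    · convert add_mem (add_mem (mul_mem X_mem_nonnegCoeffs hO) (mul_mem hC hE))
        (mul_mem (mul_mem hC (ofNat_mem _ 2)) (pow_mem X_mem_nonnegCoeffs #s)) using 1
      ring

theorem choose_card_le_coeff_prod_X_add_C (ha : ∀ i ∈ s, 1 ≤ a i) (k : ℕ) :
    ((#s).choose k : R) ≤ (∏ i ∈ s, (X + C (a i))).coeff k := by
  suffices ∏ i ∈ s, (X + C (a i)) - (X + 1) ^ #s ∈ nonnegCoeffs R by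
    simpa [coeff_X_add_one_pow] using mem_nonnegCoeffs.1 this k
  classical
  induction s using Finset.induction_on with
  | empty => simp [zero_mem]
  | insert j s hj ih =>
    have hD := ih fun i hi => ha i (mem_insert_of_mem hi)
    have hC := C_mem_nonnegCoeffs (sub_nonneg.2 (ha j (mem_insert_self j s)))
    have hXa : (X + 1 : R[X]) ∈ nonnegCoeffs R := add_mem X_mem_nonnegCoeffs (one_mem _)
    rw [prod_insert hj, card_insert_of_notMem hj]
    convert add_mem (mul_mem hXa hD) (mul_mem hC (add_mem hD (pow_mem hXa #s))) using 1
    simp only [map_sub, map_one]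
    ring

end CommRing

end Polynomial

open Polynomial

noncomputable def prodXAddNat (i : ℕ) : ℤ[X] := ∏ ℓ ∈ Icc 1 i, (X + C (ℓ : ℤ))

noncomputable def prodXSubNat (i : ℕ) : ℤ[X] := ∏ ℓ ∈ Icc 1 i, (X - C (ℓ : ℤ))

theorem prodXAddNat_succ (i : ℕ) :
    prodXAddNat (i + 1) = (X + C ((i : ℤ) + 1)) * prodXAddNat i := by
  rw [prodXAddNat, prodXAddNat, prod_Icc_succ_top (by omega), mul_comm]
  push_cast; rfl

theorem prodXSubNat_succ (i : ℕ) :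
    prodXSubNat (i + 1) = (X - C ((i : ℤ) + 1)) * prodXSubNat i := by
  rw [prodXSubNat, prodXSubNat, prod_Icc_succ_top (by omega), mul_comm]
  push_cast; rfl

theorem prodXAddNat_add_prodXSubNat_sub_mem_nonnegCoeffs (i : ℕ) :
    prodXAddNat i + prodXSubNat i - 2 * X ^ i ∈ nonnegCoeffs ℤ := by
  have h := prod_X_add_C_add_prod_X_sub_C_sub_mem_nonnegCoeffs (s := Icc 1 i)
    (a := fun ℓ : ℕ => (ℓ : ℤ)) (fun ℓ _ => ℓ.cast_nonneg)
  rwa [Nat.card_Icc, add_tsub_cancel_right] at h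

theorem coeff_prodXAddNat_pos {i k : ℕ} (hk : k ≤ i) : 0 < (prodXAddNat i).coeff k := by
  have h := choose_card_le_coeff_prod_X_add_C (s := Icc 1 i) (a := fun ℓ : ℕ => (ℓ : ℤ))
    (fun ℓ hℓ => by simp only [mem_Icc] at hℓ; exact_mod_cast hℓ.1) k
  simp only [Nat.card_Icc, add_tsub_cancel_right] at h
  exact lt_of_lt_of_le (by exact_mod_cast Nat.choose_pos hk) h

theorem coeff_X_pow_pred_mul_X_sub_C_nonpos {i k : ℕ} (hk : k < i) (c : ℤ) (hc : 0 ≤ c) :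
    (X ^ (i - 1) * (X - C c)).coeff k ≤ 0 := by
  rw [mul_sub, ← pow_succ, coeff_sub, coeff_X_pow, mul_comm, coeff_C_mul_X_pow]
  split_ifs <;> omega

theorem invariant_mem_nonnegCoeffs (A : ℕ → ℤ[X]) (hA2 : A 2 = X ^ 2 - 15 * X - 10)
    (hA : ∀ i : ℕ, 3 ≤ i → A i = (2 * X + C (i : ℤ)) * A (i - 1) - prodXSubNat i)
    (i : ℕ) (hi : 2 ≤ i) :
    6 * (X ^ (i - 1) * (X - C ((i : ℤ) + 2))) - (2 * A i + 3 * prodXAddNat i + prodXSubNat i) ∈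
      nonnegCoeffs ℤ := by
  induction i, hi using Nat.le_induction with
  | base =>
    have h2 : ∀ p : ℕ → ℤ[X], p 2 = p (0 + 1 + 1) := fun _ => rfl
    have hQ0 : prodXAddNat 0 = 1 := prod_empty
    have hP0 : prodXSubNat 0 = 1 := prod_empty
    rw [hA2, h2 prodXAddNat, h2 prodXSubNat, prodXAddNat_succ, prodXAddNat_succ, hQ0,
      prodXSubNat_succ, prodXSubNat_succ, hP0]
    convert ofNat_mem (nonnegCoeffs ℤ) 12 using 1
    norm_num
    ring
  | succ i hi ih =>
    obtain ⟨m, rfl⟩ : ∃ m, i = m + 1 := ⟨i - 1, by omega⟩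
    have hrec := hA (m + 2) (by omega)
    rw [show m + 2 - 1 = m + 1 from rfl] at hrec
    simp only [add_tsub_cancel_right] at ih ⊢
    have hlin : 2 * X + ((m + 2 : ℕ) : ℤ[X]) ∈ nonnegCoeffs ℤ :=
      add_mem (mul_mem (ofNat_mem _ 2) X_mem_nonnegCoeffs) (natCast_mem _ (m + 2))
    have hH := mul_mem (mul_mem (ofNat_mem _ 3) X_mem_nonnegCoeffs)
      (prodXAddNat_add_prodXSubNat_sub_mem_nonnegCoeffs (m + 1))
    have hmon := mul_mem (natCast_mem (nonnegCoeffs ℤ) (6 * (m + 2) * (m + 3)))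
      (pow_mem X_mem_nonnegCoeffs m)
    -- The bound is chosen so that its slack `N i` obeys
    -- `N (i + 1) = (2X + i + 1) N i + 3X (Q i + P i - 2X^i) + 6 (i + 1) (i + 2) X^(i - 1)`.
    convert add_mem (add_mem (mul_mem hlin ih) hH) hmon using 1
    rw [hrec, prodXSubNat_succ, prodXAddNat_succ]
    simp only [Nat.cast_add, Nat.cast_ofNat, Nat.cast_mul, map_add, map_natCast, map_one, map_ofNat]
    ring

open Polynomial in
theorem stmt_13 (A : ℕ → Polynomial ℤ)
    (hA2 : A 2 = X ^ 2 - 15 * X - 10)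
    (hA : ∀ i : ℕ, 3 ≤ i →
      A i = (2 * X + C (i : ℤ)) * A (i - 1) - ∏ ℓ ∈ Finset.Icc 1 i, (X - C (ℓ : ℤ))) :
    ∀ i : ℕ, 2 ≤ i → ∀ k : ℕ, k < i → (A i).coeff k < 0 := by
  intro i hi k hk
  have hN := mem_nonnegCoeffs.1 (invariant_mem_nonnegCoeffs A hA2 hA i hi) k
  have hH := mem_nonnegCoeffs.1 (prodXAddNat_add_prodXSubNat_sub_mem_nonnegCoeffs i) k
  have hc := coeff_X_pow_pred_mul_X_sub_C_nonpos hk ((i : ℤ) + 2) (by positivity)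
  have hq := coeff_prodXAddNat_pos hk.le
  simp only [coeff_sub, coeff_add, coeff_ofNat_mul, coeff_X_pow, hk.ne, if_false] at hN hH
  linarith
end

section
/- For every integer j ≥ 4 and every integer r with j ≤ r ≤ C(j+2, 2), we have ∑_{i=r−j}^{r} C(3r−1, i) > C(3r−1, r+1). -/
/-!
Write `C k = (3r-1).choose k` and `P m = ∑ k ≤ m, C k`. Summing
`(k+1) C (k+1) - k C k = (3r-1-2k) C k` by parts gives `(r+1) C (r+1) = (r-1) P r + 2 ∑ i < r, P i`,
so the claim reduces to `2 ∑ i < r-1, P i + (r+1) ∑ k < r-j, C k < 2 C r`. Below the middle the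
ratio `C k / C (k+1)` is at most `1/2`, and at most `ρ = (r-1)/(2r+1)` from `k = r-2` down, so
geometric bounds give `∑ k < r-j, C k ≤ 2^{-j} C r` and `∑ i < r-1, P i ≤ ρ C r / (2(1-ρ)^2)`.
As `2 - ρ/(1-ρ)^2 = 9(r+1)/(r+2)^2`, the claim holds as soon as `(r+2)^2 < 9 * 2^j`, which
`r ≤ (j+2).choose 2` guarantees for `j ≥ 8`; the finitely many cases `j < 8` are computed.
-/

open Finset

section GeometricDecay

variable {K : Type*} [Field K] [LinearOrder K] [IsStrictOrderedRing K] {a : ℕ → K} {ρ : K}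

theorem le_pow_mul_of_le_mul_succ (hρ : 0 ≤ ρ) (m : ℕ) :
    ∀ i, (∀ k < m + i, a k ≤ ρ * a (k + 1)) → a m ≤ ρ ^ i * a (m + i)
  | 0, _ => by simp
  | i + 1, h =>
    calc a m ≤ ρ ^ i * a (m + i) := le_pow_mul_of_le_mul_succ hρ m i fun k hk => h k (by omega)
      _ ≤ ρ ^ i * (ρ * a (m + i + 1)) := by gcongr; exact h _ (by omega)
      _ = ρ ^ (i + 1) * a (m + (i + 1)) := by rw [← add_assoc, pow_succ, mul_assoc]

theorem one_sub_mul_sum_range_le (hρ : 0 ≤ ρ) (ha : 0 ≤ a 0) :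
    ∀ n, (∀ k < n, a k ≤ ρ * a (k + 1)) → (1 - ρ) * ∑ k ∈ range (n + 1), a k ≤ a n
  | 0, _ => by
    rw [sum_range_one]
    linarith [mul_nonneg hρ ha]
  | n + 1, h => by
    have ih := one_sub_mul_sum_range_le hρ ha n fun k hk => h k (by omega)
    rw [sum_range_succ, mul_add]
    linarith [h n (by omega)]

end GeometricDecay

theorem Nat.cast_choose_succ_mul (R : Type*) [CommRing R] (n k : ℕ) :
    (n.choose (k + 1) : R) * (k + 1) = n.choose k * (n - k) := by
  rcases le_or_gt k n with hk | hk
  · have := congrArg (Nat.cast : ℕ → R) (Nat.choose_succ_right_eq n k)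
    push_cast [Nat.cast_sub hk] at this
    exact this
  · simp [Nat.choose_eq_zero_of_lt hk, Nat.choose_eq_zero_of_lt (hk.trans (Nat.lt_succ_self k))]

theorem Nat.cast_choose_le_mul_choose_succ {K : Type*} [Field K] [LinearOrder K]
    [IsStrictOrderedRing K] {n k : ℕ} {ρ : K} (h : (k + 1 : K) ≤ ρ * (n - k)) :
    (n.choose k : K) ≤ ρ * n.choose (k + 1) := by
  refine le_of_mul_le_mul_right ?_ (by positivity : (0 : K) < k + 1)
  calc (n.choose k : K) * (k + 1) ≤ n.choose k * (ρ * (n - k)) := by gcongr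
    _ = ρ * n.choose (k + 1) * (k + 1) := by
      linear_combination (-ρ) * Nat.cast_choose_succ_mul K n k

theorem Nat.succ_mul_choose_succ_eq_sum_partialSums {R : Type*} [CommRing R] (n : ℕ) :
    ∀ m : ℕ, ((m : R) + 1) * n.choose (m + 1)
      = (n - 2 * m) * ∑ k ∈ range (m + 1), (n.choose k : R)
        + 2 * ∑ i ∈ range m, ∑ k ∈ range (i + 1), (n.choose k : R)
  | 0 => by simp
  | m + 1 => by
    have ih := Nat.succ_mul_choose_succ_eq_sum_partialSums (R := R) n m
    have step := Nat.cast_choose_succ_mul R n (m + 1)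
    rw [sum_range_succ (fun k => (n.choose k : R)) (m + 1),
      sum_range_succ (fun i => ∑ k ∈ range (i + 1), (n.choose k : R)) m]
    push_cast at ih step ⊢
    linear_combination step + ih

theorem Nat.cast_three_mul_sub_one {R : Type*} [CommRing R] {r : ℕ} (hr : 1 ≤ r) :
    ((3 * r - 1 : ℕ) : R) = 3 * r - 1 := by
  push_cast [Nat.cast_sub (by omega : 1 ≤ 3 * r)]
  ring

theorem choose_three_mul_sub_one_le_half {r k : ℕ} (hk : k + 1 ≤ r) :
    ((3 * r - 1).choose k : ℝ) ≤ 2⁻¹ * (3 * r - 1).choose (k + 1) := by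
  refine Nat.cast_choose_le_mul_choose_succ ?_
  have hkr : (k : ℝ) + 1 ≤ r := by exact_mod_cast hk
  rw [Nat.cast_three_mul_sub_one (by omega)]
  linarith

theorem choose_three_mul_sub_one_le_ratio {r k : ℕ} (hk : k + 2 ≤ r) :
    ((3 * r - 1).choose k : ℝ) ≤ (r - 1) / (2 * r + 1) * (3 * r - 1).choose (k + 1) := by
  refine Nat.cast_choose_le_mul_choose_succ ?_
  have hkr : (k : ℝ) + 2 ≤ r := by exact_mod_cast hk
  rw [Nat.cast_three_mul_sub_one (by omega), div_mul_eq_mul_div, le_div_iff₀ (by positivity)]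
  nlinarith [mul_nonneg (sub_nonneg.2 hkr) (Nat.cast_nonneg (α := ℝ) r)]

theorem two_pow_mul_sum_range_choose_le {j r : ℕ} (hjr : j ≤ r) :
    2 ^ j * ∑ k ∈ range (r - j), ((3 * r - 1).choose k : ℝ) ≤ (3 * r - 1).choose r := by
  set C : ℕ → ℝ := fun k => ((3 * r - 1).choose k : ℝ)
  have hhalf : ∀ k < r, C k ≤ 2⁻¹ * C (k + 1) := fun k hk => choose_three_mul_sub_one_le_half hk
  have hsum := one_sub_mul_sum_range_le (a := C) (by norm_num) (Nat.cast_nonneg _) (r - j)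
    fun k hk => hhalf k (by omega)
  have hpow := le_pow_mul_of_le_mul_succ (a := C) (by norm_num) (r - j) j
    fun k hk => hhalf k (by omega)
  rw [sum_range_succ] at hsum
  rw [Nat.sub_add_cancel hjr] at hpow
  calc 2 ^ j * ∑ k ∈ range (r - j), C k ≤ 2 ^ j * (2⁻¹ ^ j * C r) := by
        gcongr
        linarith
    _ = C r := by rw [← mul_assoc, ← mul_pow]; norm_num

theorem sum_partialSums_choose_le {r : ℕ} (hr : 2 ≤ r) :
    2 * ((r : ℝ) + 2) ^ 2 * ∑ i ∈ range (r - 1), ∑ k ∈ range (i + 1), ((3 * r - 1).choose k : ℝ)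
      ≤ (r - 1) * (2 * r + 1) * (3 * r - 1).choose r := by
  set C : ℕ → ℝ := fun k => ((3 * r - 1).choose k : ℝ)
  set ρ : ℝ := (r - 1) / (2 * r + 1) with hρ_def
  have hr' : (2 : ℝ) ≤ r := by exact_mod_cast hr
  have hρ : 0 ≤ ρ := div_nonneg (by linarith) (by linarith)
  have hρ1 : 1 - ρ = (r + 2) / (2 * r + 1) := by
    rw [hρ_def]
    field_simp
    ring
  have hratio : ∀ k < r - 1, C k ≤ ρ * C (k + 1) :=
    fun k hk => choose_three_mul_sub_one_le_ratio (by omega)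
  have hpartial : (1 - ρ) * ∑ i ∈ range (r - 1), ∑ k ∈ range (i + 1), C k
      ≤ ∑ i ∈ range (r - 1), C i := by
    rw [mul_sum]
    exact sum_le_sum fun i hi => one_sub_mul_sum_range_le (a := C) hρ (Nat.cast_nonneg _) i
      fun k hk => hratio k (by rw [mem_range] at hi; omega)
  have hfull : (1 - ρ) * ∑ i ∈ range (r - 1), C i ≤ C (r - 2) := by
    have := one_sub_mul_sum_range_le (a := C) hρ (Nat.cast_nonneg _) (r - 2)
      fun k hk => hratio k (by omega)
    rwa [show r - 2 + 1 = r - 1 by omega] at this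
  have htop : C (r - 2) ≤ ρ * (2⁻¹ * C r) :=
    calc C (r - 2) ≤ ρ * C (r - 2 + 1) := hratio _ (by omega)
      _ ≤ ρ * (2⁻¹ * C (r - 2 + 1 + 1)) := by
          gcongr
          exact choose_three_mul_sub_one_le_half (by omega)
      _ = ρ * (2⁻¹ * C r) := by rw [show r - 2 + 1 + 1 = r by omega]
  have h1ρ : 0 ≤ 1 - ρ := by rw [hρ1]; positivity
  calc 2 * ((r : ℝ) + 2) ^ 2 * ∑ i ∈ range (r - 1), ∑ k ∈ range (i + 1), C k
      = 2 * (2 * r + 1) ^ 2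
          * ((1 - ρ) * ((1 - ρ) * ∑ i ∈ range (r - 1), ∑ k ∈ range (i + 1), C k)) := by
        rw [hρ1]
        field_simp
    _ ≤ 2 * (2 * r + 1) ^ 2 * (ρ * (2⁻¹ * C r)) := mul_le_mul_of_nonneg_left
        ((mul_le_mul_of_nonneg_left hpartial h1ρ).trans (hfull.trans htop)) (by positivity)
    _ = (r - 1) * (2 * r + 1) * C r := by
        rw [hρ_def]
        field_simp

theorem choose_succ_lt_sum_Icc_choose {j r : ℕ} (hr : 2 ≤ r) (hjr : j ≤ r)
    (hj : ((r : ℝ) + 2) ^ 2 < 9 * 2 ^ j) :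
    (3 * r - 1).choose (r + 1) < ∑ i ∈ Icc (r - j) r, (3 * r - 1).choose i := by
  set C : ℕ → ℝ := fun k => ((3 * r - 1).choose k : ℝ)
  set P : ℕ → ℝ := fun m => ∑ k ∈ range (m + 1), C k
  set S := ∑ i ∈ range (r - 1), P i
  set Q := ∑ k ∈ range (r - j), C k
  have hid : ((r : ℝ) + 1) * C (r + 1)
      = (((3 * r - 1 : ℕ) : ℝ) - 2 * r) * P r + 2 * ∑ i ∈ range r, P i :=
    Nat.succ_mul_choose_succ_eq_sum_partialSums _ r
  rw [Nat.cast_three_mul_sub_one (by omega)] at hid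
  have hsumP : ∑ i ∈ range r, P i = S + P (r - 1) := by
    rw [← sum_range_succ, Nat.sub_add_cancel (by omega)]
  have hP : P r = P (r - 1) + C r := by
    simp only [P]
    rw [Nat.sub_add_cancel (by omega), sum_range_succ]
  have hIcc : ∑ i ∈ Icc (r - j) r, C i = P r - Q := by
    rw [← Ico_add_one_right_eq_Icc, eq_sub_iff_add_eq', sum_range_add_sum_Ico _ (by omega)]
  have hQ : 2 ^ j * Q ≤ C r := two_pow_mul_sum_range_choose_le hjr
  have hS : 2 * ((r : ℝ) + 2) ^ 2 * S ≤ (r - 1) * (2 * r + 1) * C r := sum_partialSums_choose_le hr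
  have hCr : 0 < C r := Nat.cast_pos.2 (Nat.choose_pos (by omega))
  have key : 2 * S + (r + 1) * Q < 2 * C r := by
    refine lt_of_mul_lt_mul_left ?_ (by positivity : (0 : ℝ) ≤ 2 ^ j * (r + 2) ^ 2)
    nlinarith [mul_le_mul_of_nonneg_left hQ (by positivity : (0 : ℝ) ≤ (r + 2) ^ 2 * (r + 1)),
      mul_lt_mul_of_pos_right hj (by positivity : (0 : ℝ) < (r + 1) * C r)]
  rw [← Nat.cast_lt (α := ℝ), Nat.cast_sum]
  change C (r + 1) < ∑ i ∈ Icc (r - j) r, C i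
  refine lt_of_mul_lt_mul_left ?_ (by positivity : (0 : ℝ) ≤ r + 1)
  rw [hIcc]
  linarith

theorem sq_choose_two_add_two_lt {j : ℕ} (hj : 8 ≤ j) : ((j + 2).choose 2 + 2) ^ 2 < 9 * 2 ^ j := by
  induction j, hj using Nat.le_induction with
  | base => decide
  | succ j hj ih =>
    have hc : (j + 2).choose 2 * 2 = (j + 2) * (j + 1) := by
      simpa using Nat.choose_succ_right_eq (j + 2) 1
    have hsucc : (j + 3).choose 2 = (j + 2).choose 2 + (j + 2) := by
      rw [Nat.choose_succ_succ', Nat.choose_one_right, add_comm]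
    rw [hsucc, pow_succ 2 j]
    nlinarith

theorem stmt_14 (j r : ℕ) (hj : 4 ≤ j) (hjr : j ≤ r) (hr : r ≤ (j + 2).choose 2) :
    (3 * r - 1).choose (r + 1) < ∑ i ∈ Finset.Icc (r - j) r, (3 * r - 1).choose i := by
  rcases lt_or_ge j 8 with hj8 | hj8
  · -- `Nat.choose` unfolds too slowly for `decide`; the factorial form evaluates quickly
    interval_cases j <;> norm_num [Nat.choose] at hr <;> interval_cases r <;>
      (simp only [Nat.choose_eq_descFactorial_div_factorial]; decide)
  · refine choose_succ_lt_sum_Icc_choose (by omega) hjr ?_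
    have : (r + 2) ^ 2 < 9 * 2 ^ j :=
      lt_of_le_of_lt (Nat.pow_le_pow_left (by omega) 2) (sq_choose_two_add_two_lt hj8)
    exact_mod_cast this
end

section
/- For every integer m ≥ 2, the sequence f_m(r) is strictly decreasing for ⌊m/3⌋+1 ≤ r ≤ m: f_m(⌊m/3⌋+1) > f_m(⌊m/3⌋+2) > ⋯ > f_m(m) = 1. -/
/-!
Since f_m(r+1) < f_m(r) means C(m, r+1) < ∑_{i ≤ r} C(m, i), everything is about this
inequality for m < 3r. Pascal's rule in the form
∑_{i ≤ r+1} C(n+1, i) = 2 ∑_{i ≤ r} C(n, i) + C(n, r+1)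
transports it from (n, r) to (n+1, r+1), and from (n+1, r) down to (n, r), whenever
C(n, j+1) ≤ 2 C(n, j); this leaves the boundary case m = 3k+2, r = k+1.

There the defect b_k = ∑_{i ≤ k+1} C(3k+2, i) - C(3k+2, k+2) satisfies
b_{k+1} = 8 b_k - 30 C(3k+2, k+2) / ((2k+1)(k+3)): the first-order terms cancel, which is why
no termwise comparison of binomial coefficients works. Moreover b_k ≥ -C(3k+2, k+2) ≥ -2·7^k.
If some b_k were ≤ 0, the defect would from then on be negative and grow in size like 8^j,
beating 7^j.
-/

open Finset Filter Topology

theorem pos_of_lt_mul_of_neg_pow_le {u : ℕ → ℝ} {a b C : ℝ} (hb : 0 ≤ b) (hab : b < a)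
    (hu : ∀ n, u (n + 1) < a * u n) (hlow : ∀ n, -(C * b ^ n) ≤ u n) (n : ℕ) : 0 < u n := by
  by_contra! hn
  have ha : 0 < a := hb.trans_lt hab
  have hneg : u (n + 1) < 0 := (hu n).trans_le (mul_nonpos_of_nonneg_of_nonpos ha.le hn)
  have hgeom (j : ℕ) : u (n + 1 + j) ≤ a ^ j * u (n + 1) :=
    le_geom (u := fun j => u (n + 1 + j)) ha.le j fun k _ => (hu _).le
  have hbound (j : ℕ) : -u (n + 1) ≤ C * b ^ (n + 1) * (b / a) ^ j := by
    rw [div_pow, ← mul_div_assoc, le_div_iff₀ (by positivity)]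
    have hlow' := hlow (n + 1 + j)
    rw [pow_add] at hlow'
    linarith [hgeom j]
  have hlim : Tendsto (fun j => C * b ^ (n + 1) * (b / a) ^ j) atTop (𝓝 0) := by
    simpa using (tendsto_pow_atTop_nhds_zero_of_lt_one (div_nonneg hb ha.le)
      ((div_lt_one ha).2 hab)).const_mul (C * b ^ (n + 1))
  linarith [ge_of_tendsto' hlim hbound]

theorem sum_range_choose_succ_add_choose (n r : ℕ) :
    ∑ i ∈ range (r + 1), (n + 1).choose i + n.choose r =
      2 * ∑ i ∈ range (r + 1), n.choose i := by
  induction r with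
  | zero => simp
  | succ r ih =>
    rw [sum_range_succ, sum_range_succ (fun i => n.choose i), Nat.choose_succ_succ']
    omega

theorem sum_range_succ_choose_succ (n r : ℕ) :
    ∑ i ∈ range (r + 2), (n + 1).choose i =
      2 * ∑ i ∈ range (r + 1), n.choose i + n.choose (r + 1) := by
  have hpascal := sum_range_choose_succ_add_choose n (r + 1)
  rw [sum_range_succ (fun i => n.choose i)] at hpascal
  rw [show r + 2 = r + 1 + 1 from rfl]
  omega

theorem choose_succ_le_two_mul_choose {n j : ℕ} (h : n ≤ 3 * j + 2) :
    n.choose (j + 1) ≤ 2 * n.choose j := by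
  refine Nat.le_of_mul_le_mul_right ?_ j.succ_pos
  calc n.choose (j + 1) * (j + 1) = n.choose j * (n - j) := Nat.choose_succ_right_eq n j
    _ ≤ n.choose j * (2 * (j + 1)) := Nat.mul_le_mul_left _ (by omega)
    _ = 2 * n.choose j * (j + 1) := by ring

theorem choose_succ_lt_sum_range_choose_succ {n r : ℕ} (hn : n ≤ 3 * r + 5)
    (h : n.choose (r + 1) < ∑ i ∈ range (r + 1), n.choose i) :
    (n + 1).choose (r + 2) < ∑ i ∈ range (r + 2), (n + 1).choose i := by
  have hstep : n.choose (r + 2) ≤ 2 * n.choose (r + 1) := choose_succ_le_two_mul_choose (by omega)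
  have hpascal : (n + 1).choose (r + 2) = n.choose (r + 1) + n.choose (r + 2) :=
    Nat.choose_succ_succ' n (r + 1)
  rw [hpascal, sum_range_succ_choose_succ]
  omega

theorem choose_succ_lt_sum_range_choose_of_succ {n r : ℕ} (hn : n ≤ 3 * r + 2)
    (h : (n + 1).choose (r + 1) < ∑ i ∈ range (r + 1), (n + 1).choose i) :
    n.choose (r + 1) < ∑ i ∈ range (r + 1), n.choose i := by
  have hpascal := sum_range_choose_succ_add_choose n r
  have hstep := choose_succ_le_two_mul_choose hn
  rw [Nat.choose_succ_succ'] at h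
  omega

theorem choose_three_mul_add_five_le_seven_mul (k : ℕ) (hk : 1 ≤ k) :
    (3 * k + 5).choose (k + 3) ≤ 7 * (3 * k + 2).choose (k + 2) := by
  have ratio : ((3 * k + 5).choose (k + 3) : ℝ) * ((k + 3) * (2 * k + 1) * (2 * k + 2))
      = (3 * k + 2).choose (k + 2) * ((3 * k + 3) * (3 * k + 4) * (3 * k + 5)) := by
    rw [Nat.cast_choose ℝ (by omega : k + 3 ≤ 3 * k + 5),
      Nat.cast_choose ℝ (by omega : k + 2 ≤ 3 * k + 2),
      show 3 * k + 5 - (k + 3) = 2 * k + 2 by omega, show 3 * k + 2 - (k + 2) = 2 * k by omega]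
    simp only [Nat.factorial_succ]
    push_cast
    field_simp
    ring
  have hk' : (1 : ℝ) ≤ k := by exact_mod_cast hk
  have hpoly : ((3 * k + 3) * (3 * k + 4) * (3 * k + 5) : ℝ)
      ≤ 7 * ((k + 3) * (2 * k + 1) * (2 * k + 2)) := by
    nlinarith [mul_nonneg (sub_nonneg.2 hk') (by positivity : (0 : ℝ) ≤ (k + 1) * (k + 18))]
  rw [← Nat.cast_le (α := ℝ)]
  push_cast
  refine le_of_mul_le_mul_right ?_ (by positivity : (0 : ℝ) < (k + 3) * (2 * k + 1) * (2 * k + 2))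
  calc _ = ((3 * k + 2).choose (k + 2) : ℝ) * ((3 * k + 3) * (3 * k + 4) * (3 * k + 5)) := ratio
    _ ≤ (3 * k + 2).choose (k + 2) * (7 * ((k + 3) * (2 * k + 1) * (2 * k + 2))) :=
      mul_le_mul_of_nonneg_left hpoly (Nat.cast_nonneg _)
    _ = _ := by ring

theorem choose_three_mul_add_two_le_two_mul_seven_pow (k : ℕ) :
    (3 * k + 2).choose (k + 2) ≤ 2 * 7 ^ k := by
  induction k with
  | zero => decide
  | succ k ih =>
    rcases k with _ | k
    · decide
    · calc (3 * (k + 2) + 2).choose (k + 2 + 2) ≤ 7 * (3 * (k + 1) + 2).choose (k + 1 + 2) :=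
            choose_three_mul_add_five_le_seven_mul (k + 1) (by omega)
        _ ≤ 2 * 7 ^ (k + 2) := by rw [pow_succ]; omega

theorem sum_range_choose_add_eight_mul_choose_lt (k : ℕ) :
    ∑ i ∈ range (k + 3), (3 * k + 5).choose i + 8 * (3 * k + 2).choose (k + 2)
      < 8 * ∑ i ∈ range (k + 2), (3 * k + 2).choose i + (3 * k + 5).choose (k + 3) := by
  have identity : (8 * (3 * k + 2).choose (k + 2) + (3 * k + 4).choose (k + 2) : ℝ)
        + 30 * (3 * k + 2).choose (k + 2) / ((2 * k + 1) * (k + 3))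
      = (3 * k + 5).choose (k + 3) + 4 * (3 * k + 2).choose (k + 1)
        + 2 * (3 * k + 3).choose (k + 1) := by
    rw [Nat.cast_choose ℝ (by omega : k + 3 ≤ 3 * k + 5),
      Nat.cast_choose ℝ (by omega : k + 2 ≤ 3 * k + 2),
      Nat.cast_choose ℝ (by omega : k + 2 ≤ 3 * k + 4),
      Nat.cast_choose ℝ (by omega : k + 1 ≤ 3 * k + 2),
      Nat.cast_choose ℝ (by omega : k + 1 ≤ 3 * k + 3),
      show 3 * k + 5 - (k + 3) = 2 * k + 2 by omega, show 3 * k + 2 - (k + 2) = 2 * k by omega,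
      show 3 * k + 4 - (k + 2) = 2 * k + 2 by omega, show 3 * k + 2 - (k + 1) = 2 * k + 1 by omega,
      show 3 * k + 3 - (k + 1) = 2 * k + 2 by omega]
    simp only [Nat.factorial_succ]
    push_cast
    field_simp
    ring
  have defect : 8 * (3 * k + 2).choose (k + 2) + (3 * k + 4).choose (k + 2)
      < (3 * k + 5).choose (k + 3) + 4 * (3 * k + 2).choose (k + 1)
        + 2 * (3 * k + 3).choose (k + 1) := by
    have := Nat.choose_pos (by omega : k + 2 ≤ 3 * k + 2)
    rw [← Nat.cast_lt (α := ℝ)]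
    push_cast
    rw [← identity, lt_add_iff_pos_right]
    positivity
  have h5 : ∑ i ∈ range (k + 3), (3 * k + 5).choose i
      = 2 * ∑ i ∈ range (k + 2), (3 * k + 4).choose i + (3 * k + 4).choose (k + 2) :=
    sum_range_succ_choose_succ (3 * k + 4) (k + 1)
  have h4 : ∑ i ∈ range (k + 2), (3 * k + 4).choose i + (3 * k + 3).choose (k + 1)
      = 2 * ∑ i ∈ range (k + 2), (3 * k + 3).choose i :=
    sum_range_choose_succ_add_choose (3 * k + 3) (k + 1)
  have h3 : ∑ i ∈ range (k + 2), (3 * k + 3).choose i + (3 * k + 2).choose (k + 1)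
      = 2 * ∑ i ∈ range (k + 2), (3 * k + 2).choose i :=
    sum_range_choose_succ_add_choose (3 * k + 2) (k + 1)
  omega

theorem choose_lt_sum_range_choose_three_mul_add_two (k : ℕ) :
    (3 * k + 2).choose (k + 2) < ∑ i ∈ range (k + 2), (3 * k + 2).choose i := by
  let u : ℕ → ℝ := fun k =>
    ∑ i ∈ range (k + 2), ((3 * k + 2).choose i : ℝ) - (3 * k + 2).choose (k + 2)
  suffices 0 < u k by
    rw [sub_pos] at this
    exact_mod_cast this
  refine pos_of_lt_mul_of_neg_pow_le (a := 8) (b := 7) (C := 2) (by norm_num) (by norm_num)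
    (fun j => ?_) (fun j => ?_) k
  · have h : ∑ i ∈ range (j + 3), ((3 * j + 5).choose i : ℝ) + 8 * (3 * j + 2).choose (j + 2)
        < 8 * ∑ i ∈ range (j + 2), ((3 * j + 2).choose i : ℝ)
          + (3 * j + 5).choose (j + 3) := by
      exact_mod_cast sum_range_choose_add_eight_mul_choose_lt j
    show ∑ i ∈ range (j + 3), ((3 * j + 5).choose i : ℝ) - (3 * j + 5).choose (j + 3)
      < 8 * (∑ i ∈ range (j + 2), ((3 * j + 2).choose i : ℝ) - (3 * j + 2).choose (j + 2))
    linarith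
  · have hD : ((3 * j + 2).choose (j + 2) : ℝ) ≤ 2 * 7 ^ j := by
      exact_mod_cast choose_three_mul_add_two_le_two_mul_seven_pow j
    have hS : 0 ≤ ∑ i ∈ range (j + 2), ((3 * j + 2).choose i : ℝ) := by positivity
    simp only [u]
    linarith

theorem choose_succ_lt_sum_range_choose {m r : ℕ} (h : m < 3 * r) :
    m.choose (r + 1) < ∑ i ∈ range (r + 1), m.choose i := by
  induction m generalizing r with
  | zero => simp [sum_range_succ']
  | succ m ih =>
    obtain ⟨k, rfl⟩ : ∃ k, r = k + 1 := ⟨r - 1, by omega⟩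
    rcases (by omega : m = 3 * k + 1 ∨ m = 3 * k ∨ m < 3 * k) with rfl | rfl | hm
    · exact choose_lt_sum_range_choose_three_mul_add_two k
    · exact choose_succ_lt_sum_range_choose_of_succ (by omega)
        (choose_lt_sum_range_choose_three_mul_add_two k)
    · exact choose_succ_lt_sum_range_choose_succ (by omega) (ih hm)

theorem stmt_16_general (m : ℕ) :
    (∀ r : ℕ, m / 3 + 1 ≤ r → r < m →
      (∑ i ∈ Finset.range (r + 2), (m.choose i : ℝ)) / 2 ^ (r + 1)
        < (∑ i ∈ Finset.range (r + 1), (m.choose i : ℝ)) / 2 ^ r) ∧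
    (∑ i ∈ Finset.range (m + 1), (m.choose i : ℝ)) / 2 ^ m = 1 := by
  refine ⟨fun r hr _ => ?_, ?_⟩
  · have key : (m.choose (r + 1) : ℝ) < ∑ i ∈ range (r + 1), (m.choose i : ℝ) := by
      exact_mod_cast choose_succ_lt_sum_range_choose (by omega : m < 3 * r)
    rw [sum_range_succ, pow_succ, div_lt_div_iff₀ (by positivity) (by positivity)]
    linarith [mul_lt_mul_of_pos_right key (pow_pos two_pos r)]
  · rw [div_eq_one_iff_eq (by positivity)]
    exact_mod_cast Nat.sum_range_choose m

theorem stmt_16 (m : ℕ) (hm : 2 ≤ m) :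
    (∀ r : ℕ, m / 3 + 1 ≤ r → r < m →
      (∑ i ∈ Finset.range (r + 2), (m.choose i : ℝ)) / 2 ^ (r + 1)
        < (∑ i ∈ Finset.range (r + 1), (m.choose i : ℝ)) / 2 ^ r) ∧
    (∑ i ∈ Finset.range (m + 1), (m.choose i : ℝ)) / 2 ^ m = 1 :=
  stmt_16_general m
end

section
/- For every integer m ≥ 0 with m ∉ {0, 3, 6, 9, 12}, the maximum of f_m(r) over 0 ≤ r ≤ m is attained at r = ⌊m/3⌋ + 1; that is, f_m(r) ≤ f_m(⌊m/3⌋+1) for all 0 ≤ r ≤ m. -/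
/-!
Write `S r = ∑_{i ≤ r} C(m, i)`. Then `f_m(r) ≤ f_m(r + 1)` iff `S r ≤ C(m, r + 1)`. Since
`C(m, r) = (r + 1) / (m - r) · C(m, r + 1)`, the ratio `u r = S r / C(m, r)` satisfies
`u (r + 1) = 1 + u r · (r + 1) / (m - r)`, and induction squeezes it, for `3 r ≤ m`, between
`(m - r) / (m - 2 r + 2)` and `(m - r + 5) / (m - 2 r + 4)`. The upper bound gives
`S r ≤ C(m, r + 1)` for `r ≤ ⌊m/3⌋` whenever `m ∉ {0, 1, 3, 6, 9, 12}` (`m = 1` is checked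
directly); the lower bound gives `C(m, k + 2) ≤ S (k + 1)` at `k = ⌊m/3⌋`, and from there on
`C(m, r + 2) ≤ 2 C(m, r + 1)` keeps `f_m` decreasing.
-/

open Finset

namespace ChooseSum

theorem cast_choose_succ_right_eq {R : Type*} [Ring R] (m r : ℕ) :
    (m.choose (r + 1) : R) * (r + 1) = m.choose r * (m - r) := by
  rcases le_or_gt r m with h | h
  · have := congrArg (Nat.cast (R := R)) (Nat.choose_succ_right_eq m r)
    push_cast [h] at this
    exact this
  · simp [Nat.choose_eq_zero_of_lt h, Nat.choose_eq_zero_of_lt (h.trans (Nat.lt_succ_self r))]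

def chooseSum (m r : ℕ) : ℝ := ∑ i ∈ range (r + 1), (m.choose i : ℝ)

theorem chooseSum_succ (m r : ℕ) : chooseSum m (r + 1) = chooseSum m r + m.choose (r + 1) :=
  sum_range_succ _ _

theorem chooseSum_nonneg (m r : ℕ) : 0 ≤ chooseSum m r := by
  unfold chooseSum; positivity

theorem choose_eq_div_mul_choose_succ {m r : ℕ} (hr : r < m) :
    (m.choose r : ℝ) = (r + 1) / (m - r) * m.choose (r + 1) := by
  have hpos : (0 : ℝ) < m - r := sub_pos.2 (by exact_mod_cast hr)
  rw [div_mul_eq_mul_div, eq_div_iff hpos.ne', mul_comm _ (m.choose (r + 1) : ℝ),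
    cast_choose_succ_right_eq]

theorem chooseSum_succ_le {m r : ℕ} {a b : ℝ} (hr : r < m)
    (h : chooseSum m r ≤ a * m.choose r) (hab : 1 + a * ((r + 1) / (m - r)) ≤ b) :
    chooseSum m (r + 1) ≤ b * m.choose (r + 1) :=
  calc chooseSum m (r + 1) ≤ a * m.choose r + m.choose (r + 1) := by
        rw [chooseSum_succ]; gcongr
    _ = (1 + a * ((r + 1) / (m - r))) * m.choose (r + 1) := by
        rw [choose_eq_div_mul_choose_succ hr]; ring
    _ ≤ b * m.choose (r + 1) := by gcongr

theorem le_chooseSum_succ {m r : ℕ} {a b : ℝ}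
    (h : a * m.choose r ≤ chooseSum m r) (hab : b ≤ 1 + a * ((r + 1) / (m - r))) :
    b * m.choose (r + 1) ≤ chooseSum m (r + 1) := by
  rcases le_or_gt m r with hr | hr
  · rw [Nat.choose_eq_zero_of_lt (by omega), Nat.cast_zero, mul_zero]
    exact chooseSum_nonneg m (r + 1)
  calc b * m.choose (r + 1) ≤ (1 + a * ((r + 1) / (m - r))) * m.choose (r + 1) := by gcongr
    _ = a * m.choose r + m.choose (r + 1) := by
        rw [choose_eq_div_mul_choose_succ hr]; ring
    _ ≤ chooseSum m (r + 1) := by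
        rw [chooseSum_succ]; gcongr

theorem mul_choose_le_chooseSum {m r : ℕ} (hr : 3 * r ≤ m) :
    ((m : ℝ) - r) / (m - 2 * r + 2) * m.choose r ≤ chooseSum m r := by
  induction r with
  | zero =>
    have hm : (0 : ℝ) ≤ m := m.cast_nonneg
    simp only [chooseSum, zero_add, range_one, sum_singleton, Nat.choose_zero_right, Nat.cast_one,
      Nat.cast_zero, mul_zero, sub_zero, mul_one]
    rw [div_le_one (by linarith)]
    linarith
  | succ r ih =>
    refine le_chooseSum_succ (ih (by omega)) ?_
    have h3 : (3 : ℝ) * r + 3 ≤ m := by exact_mod_cast (show 3 * r + 3 ≤ m by omega)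
    have hmr : (0 : ℝ) < m - r := by linarith
    have hd : (0 : ℝ) < m - 2 * r + 2 := by linarith
    rw [show ((m : ℝ) - r) / (m - 2 * r + 2) * ((r + 1) / (m - r)) = (r + 1) / (m - 2 * r + 2) by
      field_simp, one_add_div hd.ne']
    push_cast
    rw [div_le_div_iff₀ (by linarith) hd]
    nlinarith

theorem sub_one_mul_sub_two_nonneg (n : ℕ) : 0 ≤ ((n : ℝ) - 1) * (n - 2) := by
  rcases n with _ | _ | n
  · norm_num
  · norm_num
  · push_cast
    nlinarith

theorem chooseSum_le_mul_choose {m r : ℕ} (hr : 3 * r ≤ m) :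
    chooseSum m r ≤ ((m : ℝ) - r + 5) / (m - 2 * r + 4) * m.choose r := by
  induction r with
  | zero =>
    have hm : (0 : ℝ) ≤ m := m.cast_nonneg
    simp only [chooseSum, zero_add, range_one, sum_singleton, Nat.choose_zero_right, Nat.cast_one,
      Nat.cast_zero, mul_zero, sub_zero, mul_one]
    rw [le_div_iff₀ (by linarith)]
    linarith
  | succ r ih =>
    refine chooseSum_succ_le (by omega) (ih (by omega)) ?_
    have h3 : (3 : ℝ) * r + 3 ≤ m := by exact_mod_cast (show 3 * r + 3 ≤ m by omega)
    -- with `m = 3 r + 3 + s` the step reduces to `0 ≤ (r - 1) * (r - 2) + s * (s + 7)`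
    have hr2 := sub_one_mul_sub_two_nonneg r
    have hd : (0 : ℝ) < (m - 2 * r + 4) * (m - r) := mul_pos (by linarith) (by linarith)
    rw [div_mul_div_comm, one_add_div hd.ne', div_le_div_iff₀ hd (by push_cast; linarith)]
    push_cast
    nlinarith

theorem chooseSum_le_choose_succ {m r : ℕ} (hm : m ∉ ({0, 3, 6, 9, 12} : Set ℕ))
    (hr : r ≤ m / 3) : chooseSum m r ≤ m.choose (r + 1) := by
  rcases eq_or_ne m 1 with rfl | hm1
  · obtain rfl : r = 0 := by omega
    simp [chooseSum]
  obtain ⟨s, hs⟩ : ∃ s, m = 3 * r + s := ⟨m - 3 * r, by omega⟩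
  simp only [Set.mem_insert_iff, Set.mem_singleton_iff, not_or] at hm
  have hslack : 5 ≤ 2 * r * s + r + s ^ 2 + 3 * s := by
    rcases Nat.lt_or_ge s 2 with hs2 | hs2
    · interval_cases s <;> omega
    · nlinarith
  have hslack' : (5 : ℝ) ≤ 2 * r * s + r + s ^ 2 + 3 * s := by exact_mod_cast hslack
  have hs' : (m : ℝ) = 3 * r + s := by exact_mod_cast hs
  calc chooseSum m r ≤ ((m : ℝ) - r + 5) / (m - 2 * r + 4) * m.choose r :=
        chooseSum_le_mul_choose (by omega)
    _ ≤ ((m : ℝ) - r) / (r + 1) * m.choose r := by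
        refine mul_le_mul_of_nonneg_right ?_ (Nat.cast_nonneg _)
        rw [div_le_div_iff₀ (by linarith) (by linarith), hs']
        nlinarith
    _ = m.choose (r + 1) := by
        rw [div_mul_eq_mul_div, div_eq_iff (by positivity), cast_choose_succ_right_eq, mul_comm]

theorem choose_add_two_le_chooseSum_succ {m r : ℕ} (h₁ : 3 * r ≤ m) (h₂ : m ≤ 3 * r + 2) :
    (m.choose (r + 2) : ℝ) ≤ chooseSum m (r + 1) := by
  rcases Nat.eq_zero_or_pos m with rfl | hm
  · simp [chooseSum_nonneg]
  have h₁' : (3 : ℝ) * r ≤ m := by exact_mod_cast h₁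
  have h₂' : (m : ℝ) ≤ 3 * r + 2 := by exact_mod_cast h₂
  have hmr : (0 : ℝ) < m - r := sub_pos.2 (by exact_mod_cast (show r < m by omega))
  have hd : (0 : ℝ) < m - 2 * r + 2 := by linarith
  have hC : (m.choose (r + 2) : ℝ) = ((m : ℝ) - r - 1) / (r + 2) * m.choose (r + 1) := by
    have := cast_choose_succ_right_eq (R := ℝ) m (r + 1)
    push_cast at this
    field_simp
    linear_combination this
  rw [hC]
  refine le_chooseSum_succ (mul_choose_le_chooseSum h₁) ?_
  rw [show ((m : ℝ) - r) / (m - 2 * r + 2) * ((r + 1) / (m - r)) = (r + 1) / (m - 2 * r + 2) by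
    field_simp, one_add_div hd.ne', div_le_div_iff₀ (by positivity) hd]
  nlinarith [mul_nonneg (sub_nonneg.2 h₂') (r.cast_nonneg : (0 : ℝ) ≤ r),
    mul_nonneg (sub_nonneg.2 h₁') (sub_nonneg.2 h₂')]

theorem choose_succ_le_two_mul_choose {m r : ℕ} (h : m ≤ 3 * r + 2) :
    (m.choose (r + 1) : ℝ) ≤ 2 * m.choose r := by
  have h' : (m : ℝ) - r ≤ 2 * (r + 1) := by
    have : (m : ℝ) ≤ 3 * r + 2 := by exact_mod_cast h
    linarith
  refine le_of_mul_le_mul_right ?_ (by positivity : (0 : ℝ) < r + 1)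
  calc (m.choose (r + 1) : ℝ) * (r + 1) = m.choose r * (m - r) := cast_choose_succ_right_eq m r
    _ ≤ m.choose r * (2 * (r + 1)) := by gcongr
    _ = 2 * m.choose r * (r + 1) := by ring

theorem choose_succ_le_chooseSum {m r : ℕ} (hr : m / 3 + 1 ≤ r) :
    (m.choose (r + 1) : ℝ) ≤ chooseSum m r := by
  induction r, hr using Nat.le_induction with
  | base => exact choose_add_two_le_chooseSum_succ (by omega) (by omega)
  | succ r hr ih =>
    calc (m.choose (r + 1 + 1) : ℝ) ≤ m.choose (r + 1) + m.choose (r + 1) := by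
          linarith [choose_succ_le_two_mul_choose (m := m) (r := r + 1) (by omega)]
      _ ≤ chooseSum m r + m.choose (r + 1) := by gcongr
      _ = chooseSum m (r + 1) := (chooseSum_succ m r).symm

noncomputable def scaledChooseSum (m r : ℕ) : ℝ := chooseSum m r / 2 ^ r

theorem scaledChooseSum_succ_sub (m r : ℕ) :
    scaledChooseSum m (r + 1) - scaledChooseSum m r =
      (m.choose (r + 1) - chooseSum m r) / 2 ^ (r + 1) := by
  simp only [scaledChooseSum, chooseSum_succ, pow_succ]
  field_simp
  ring

theorem scaledChooseSum_monotoneOn {m : ℕ} (hm : m ∉ ({0, 3, 6, 9, 12} : Set ℕ)) :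
    MonotoneOn (scaledChooseSum m) (Set.Iic (m / 3 + 1)) := by
  refine monotoneOn_of_le_succ Set.ordConnected_Iic fun r _ _ hr => ?_
  rw [Order.succ_eq_add_one, Set.mem_Iic] at hr
  rw [Order.succ_eq_add_one, ← sub_nonneg, scaledChooseSum_succ_sub]
  exact div_nonneg (sub_nonneg.2 (chooseSum_le_choose_succ hm (by omega))) (by positivity)

theorem scaledChooseSum_antitoneOn (m : ℕ) :
    AntitoneOn (scaledChooseSum m) (Set.Ici (m / 3 + 1)) :=
  antitoneOn_nat_Ici_of_succ_le fun r hr => by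
    rw [← sub_nonpos, scaledChooseSum_succ_sub]
    exact div_nonpos_of_nonpos_of_nonneg (sub_nonpos.2 (choose_succ_le_chooseSum hr))
      (by positivity)

end ChooseSum

open ChooseSum in
theorem stmt_17 (m : ℕ) (hne : m ∉ ({0, 3, 6, 9, 12} : Set ℕ)) :
    ∀ r : ℕ, r ≤ m →
      (∑ i ∈ Finset.range (r + 1), (m.choose i : ℝ)) / 2 ^ r
        ≤ (∑ i ∈ Finset.range (m / 3 + 2), (m.choose i : ℝ)) / 2 ^ (m / 3 + 1) := by
  intro r _
  change scaledChooseSum m r ≤ scaledChooseSum m (m / 3 + 1)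
  rcases le_total r (m / 3 + 1) with h | h
  · exact scaledChooseSum_monotoneOn hne h (Set.mem_Iic.2 le_rfl) h
  · exact scaledChooseSum_antitoneOn m (Set.mem_Ici.2 le_rfl) h h
end
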